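/- Let φ : [0,2] × ℝ → ℝ be continuous with φ_c(0) > 0 for all c ∈ [0,2] and φ_2^n(0) < 0 for all n ≥ 2, and set Φ_n(c) = φ_c^n(0). Suppose n ≥ 5 and 2 ≤ i ≤ n-2, Φ_{n-1}(c₁) = 0 with c₁ ∈ [0,2), Φ_{n-i}(c₂) = 0 with c₂ ∈ [0,2), and c₂ is strictly larger than every solution of Φ_i(c) = 0 in [0,2]. Then Φ_n(c) = 0 has a solution strictly between c₁ and c₂ (assuming c₁ ≠ c₂). -/

import Mathlib

/-!
Write `Φ_k(c) = (φ c)^[k] 0`; each `Φ_k` is continuous on `[0, 2]`. Since `Φ_{n-1}(c₁) = 0`,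
`Φ_n(c₁) = φ_{c₁}(0) > 0`. Since `0` is a periodic point of `φ_{c₂}` of period `n - i`,
`Φ_n(c₂) = Φ_i(c₂)`, and this is negative: `Φ_i(2) < 0` and `Φ_i` has no zero on `[c₂, 2]`.
The intermediate value theorem gives a zero of `Φ_n` strictly between `c₁` and `c₂`.
-/

open Set Function

theorem ContinuousOn.iterate_apply {α β : Type*} [TopologicalSpace α] [TopologicalSpace β]
    {φ : α → β → β} {s : Set α} (hφ : ContinuousOn (fun p : α × β => φ p.1 p.2) (s ×ˢ univ))
    (x₀ : β) (k : ℕ) : ContinuousOn (fun c => (φ c)^[k] x₀) s := by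
  induction k with
  | zero => exact continuousOn_const
  | succ k ih =>
    simp only [iterate_succ_apply']
    exact hφ.comp (continuousOn_id.prodMk ih) fun c hc => ⟨hc, mem_univ _⟩

theorem neg_of_neg_right_of_forall_ne_zero {f : ℝ → ℝ} {a b : ℝ} (hab : a ≤ b)
    (hf : ContinuousOn f (Icc a b)) (hb : f b < 0) (hzero : ∀ c ∈ Icc a b, f c ≠ 0) :
    f a < 0 := by
  by_contra! ha
  obtain ⟨c, hc, hfc⟩ := intermediate_value_Icc' hab hf ⟨hb.le, ha⟩
  exact hzero c hc hfc

theorem exists_zero_mem_Ioo_min_max {f : ℝ → ℝ} {a b : ℝ} (hf : ContinuousOn f (uIcc a b))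
    (ha : 0 < f a) (hb : f b < 0) : ∃ c ∈ Ioo (min a b) (max a b), f c = 0 := by
  obtain ⟨c, ⟨hac, hcb⟩, hfc⟩ := intermediate_value_uIcc hf (mem_uIcc_of_ge hb.le ha.le)
  have hca : c ≠ a := by rintro rfl; exact ha.ne' hfc
  have hcb' : c ≠ b := by rintro rfl; exact hb.ne hfc
  refine ⟨c, ⟨lt_of_le_of_ne hac ?_, lt_of_le_of_ne hcb ?_⟩, hfc⟩
  · rcases min_choice a b with h | h <;> rw [h] <;> [exact hca.symm; exact hcb'.symm]
  · rcases max_choice a b with h | h <;> rw [h] <;> [exact hca; exact hcb']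

theorem iterate_add_apply_of_iterate_apply_eq_self {α : Type*} {f : α → α} {x : α} {m : ℕ}
    (hx : f^[m] x = x) (k : ℕ) : f^[k + m] x = f^[k] x := by
  rw [iterate_add_apply, hx]

theorem zero_between_general
    (φ : ℝ → ℝ → ℝ)
    (hcont : ContinuousOn (fun p : ℝ × ℝ => φ p.1 p.2) (Set.Icc 0 2 ×ˢ Set.univ))
    (hpos : ∀ c ∈ Set.Icc (0:ℝ) 2, φ c 0 > 0)
    (hneg : ∀ n : ℕ, 2 ≤ n → (φ 2)^[n] 0 < 0)
    (n i : ℕ) (hi1 : 2 ≤ i) (hi2 : i ≤ n - 2)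
    (c₁ c₂ : ℝ) (hc₁ : c₁ ∈ Set.Ico (0:ℝ) 2) (hc₂ : c₂ ∈ Set.Ico (0:ℝ) 2)
    (hz₁ : (φ c₁)^[n-1] 0 = 0) (hz₂ : (φ c₂)^[n-i] 0 = 0)
    (hmax : ∀ c ∈ Set.Icc (0:ℝ) 2, (φ c)^[i] 0 = 0 → c < c₂) :
    ∃ c ∈ Set.Ioo (min c₁ c₂) (max c₁ c₂), (φ c)^[n] 0 = 0 := by
  have hΦ := hcont.iterate_apply 0
  have hc₁' : c₁ ∈ Icc (0:ℝ) 2 := Ico_subset_Icc_self hc₁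
  have hc₂' : c₂ ∈ Icc (0:ℝ) 2 := Ico_subset_Icc_self hc₂
  have hΦ₁ : 0 < (φ c₁)^[n] 0 := by
    rw [← Nat.sub_add_cancel (by omega : 1 ≤ n), iterate_succ_apply', hz₁]
    exact hpos c₁ hc₁'
  have hΦi : (φ c₂)^[i] 0 < 0 :=
    neg_of_neg_right_of_forall_ne_zero (f := fun c => (φ c)^[i] 0) hc₂.2.le ((hΦ i).mono (Icc_subset_Icc_left hc₂.1))
      (hneg i hi1) fun c hc hzero =>
        (hmax c ⟨hc₂.1.trans hc.1, hc.2⟩ hzero).not_ge hc.1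
  have hΦ₂ : (φ c₂)^[n] 0 < 0 := by
    rwa [← Nat.add_sub_cancel' (by omega : i ≤ n), iterate_add_apply_of_iterate_apply_eq_self hz₂]
  exact exists_zero_mem_Ioo_min_max ((hΦ n).mono (uIcc_subset_Icc hc₁' hc₂')) hΦ₁ hΦ₂

theorem zero_between
    (φ : ℝ → ℝ → ℝ)
    (hcont : ContinuousOn (fun p : ℝ × ℝ => φ p.1 p.2) (Set.Icc 0 2 ×ˢ Set.univ))
    (hpos : ∀ c ∈ Set.Icc (0:ℝ) 2, φ c 0 > 0)
    (hneg : ∀ n : ℕ, 2 ≤ n → (φ 2)^[n] 0 < 0)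
    (n i : ℕ) (hn : 5 ≤ n) (hi1 : 2 ≤ i) (hi2 : i ≤ n - 2)
    (c₁ c₂ : ℝ) (hc₁ : c₁ ∈ Set.Ico (0:ℝ) 2) (hc₂ : c₂ ∈ Set.Ico (0:ℝ) 2)
    (hz₁ : (φ c₁)^[n-1] 0 = 0) (hz₂ : (φ c₂)^[n-i] 0 = 0)
    (hmax : ∀ c ∈ Set.Icc (0:ℝ) 2, (φ c)^[i] 0 = 0 → c < c₂)
    (hne : c₁ ≠ c₂) :
    ∃ c ∈ Set.Ioo (min c₁ c₂) (max c₁ c₂), (φ c)^[n] 0 = 0 :=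
  zero_between_general φ hcont hpos hneg n i hi1 hi2 c₁ c₂ hc₁ hc₂ hz₁ hz₂ hmax
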